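/- For every n ≥ 1, consider the Muller game 𝒢_n = (G_n, 𝓕₀ⁿ, 𝓕₁ⁿ) where G_n = (V_n, V_n, ∅, E_n) with V_n = {0,…,n}, E_n = {(i+1, i) : i < n} ∪ {(0,n), (1,n)} (all vertices belong to Player 0), 𝓕₀ⁿ = {V_n} and 𝓕₁ⁿ = 2^{V_n} \ {V_n}. Then Player 0 has a positional winning strategy σ for 𝒢_n from every vertex such that maxscore_{𝓕₁ⁿ}(play(v, σ, τ)) ≤ 2 for every vertex v ∈ V_n and every strategy τ of Player 1. -/

import Mathlib

/- Common definitions for finite-time Muller games, following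
   McNaughton / Fearnley-Zimmermann. -/

universe u

variable {V : Type u}

/-- The occurrence set of a finite word: the set of letters occurring in it. -/
def occ (x : List V) : Set V := {v | v ∈ x}

/-- `score F w` is the maximal `k` such that some suffix of `w` decomposes as
`x₁ ⋯ x_k` with every `xᵢ` non-empty and `occ xᵢ = F` (with `max ∅ = 0`). -/
noncomputable def score (F : Set V) (w : List V) : ℕ :=
  sSup {k | ∃ xs : List (List V), xs.length = k ∧
    (∀ x ∈ xs, x ≠ [] ∧ occ x = F) ∧ xs.flatten <:+ w}

/-- `maxscore 𝓕 w` is the maximum of `score F u` over `F ∈ 𝓕` and non-empty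
prefixes `u` of `w`. -/
noncomputable def maxscore (𝓕 : Set (Set V)) (w : List V) : ℕ :=
  sSup {n | ∃ F ∈ 𝓕, ∃ u : List V, u ≠ [] ∧ u <+: w ∧ n = score F u}

/-- `AccGood F w x` : `x` is a suffix of `w` with `occ x ⊆ F` such that removing
any suffix `y` of `x` from `w` does not change the score of `F`. -/
def AccGood (F : Set V) (w x : List V) : Prop :=
  x <:+ w ∧ occ x ⊆ F ∧
    ∀ y : List V, y <:+ x → score F (w.take (w.length - y.length)) = score F w

/-- The accumulator `acc F w` : the occurrence set of the longest suffix `x` of `w`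
with `occ x ⊆ F` such that the score of `F` did not change during `x`. -/
noncomputable def acc (F : Set V) (w : List V) : Set V :=
  occ (w.drop (sInf {i | AccGood F w (w.drop i)}))

/-- A non-empty word `w` is an `𝓕`-burden if `maxscore 𝓕 w ≤ 2` and for every
`F ∈ 𝓕` either `score F w = 0`, or `score F w = 1` and `acc F w = ∅`. -/
def Burden (𝓕 : Set (Set V)) (w : List V) : Prop :=
  w ≠ [] ∧ maxscore 𝓕 w ≤ 2 ∧
    ∀ F ∈ 𝓕, score F w = 0 ∨ (score F w = 1 ∧ acc F w = ∅)

/-- The maxscore of an infinite sequence: the supremum (in `ℕ∞`) of the scores of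
sets `F ∈ 𝓕` over all non-empty finite prefixes. -/
noncomputable def maxscoreInf (𝓕 : Set (Set V)) (ρ : ℕ → V) : ℕ∞ :=
  ⨆ F ∈ 𝓕, ⨆ n : ℕ, (score F ((List.range (n + 1)).map ρ) : ℕ∞)

/-- The set of elements occurring infinitely often in the sequence `ρ`. -/
def limitSet (ρ : ℕ → V) : Set V := {v | ∀ N : ℕ, ∃ n, N ≤ n ∧ ρ n = v}

/-- The indicator of a play: the union of all `F ∈ 𝓕` with positive score
together with all non-empty accumulators of members of `𝓕`. -/
noncomputable def ind (𝓕 : Set (Set V)) (w : List V) : Set V :=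
  (⋃ F ∈ {F ∈ 𝓕 | 0 < score F w}, F) ∪ ⋃ F ∈ {F ∈ 𝓕 | acc F w ≠ ∅}, acc F w

/-- An arena: a finite directed graph together with the set `V0` of vertices of
Player 0 (Player 1 owns the complement), where every vertex has a successor. -/
structure Arena (V : Type u) where
  V0 : Set V
  E : V → V → Prop
  exists_succ : ∀ v, ∃ u, E v u

/-- The positions of Player `i`. -/
def Arena.pos (G : Arena V) (i : Fin 2) : Set V :=
  if i = 0 then G.V0 else G.V0ᶜ

/-- A strategy maps a history (the play so far, excluding the current vertex)
and the current vertex to a successor vertex. -/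
abbrev Strategy (V : Type u) := List V → V → V

/-- A strategy is legal if it always moves along edges. -/
def Arena.Legal (G : Arena V) (σ : Strategy V) : Prop :=
  ∀ w v, G.E v (σ w v)

/-- An infinite play in `G` starting in `v`. -/
def Arena.IsPlay (G : Arena V) (v : V) (ρ : ℕ → V) : Prop :=
  ρ 0 = v ∧ ∀ n, G.E (ρ n) (ρ (n + 1))

/-- An infinite play is consistent with the strategy `σ` of Player `i`. -/
def Arena.ConsistentInf (G : Arena V) (i : Fin 2) (σ : Strategy V) (ρ : ℕ → V) : Prop :=
  ∀ n, ρ n ∈ G.pos i → ρ (n + 1) = σ ((List.range n).map ρ) (ρ n)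

/-- Player `i` (with winning condition `𝓕i`) wins the Muller game from `v`. -/
def Arena.MullerWinFrom (G : Arena V) (i : Fin 2) (𝓕i : Set (Set V)) (v : V) : Prop :=
  ∃ σ : Strategy V, G.Legal σ ∧
    ∀ ρ : ℕ → V, G.IsPlay v ρ → G.ConsistentInf i σ ρ → limitSet ρ ∈ 𝓕i

/-- The winning region of Player `i` in the Muller game. -/
def Arena.MullerWinRegion (G : Arena V) (i : Fin 2) (𝓕i : Set (Set V)) : Set V :=
  {v | G.MullerWinFrom i 𝓕i v}

/-- A finite play is consistent with the strategy `σ` of Player `i`. -/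
def Arena.ConsistentFin (G : Arena V) (i : Fin 2) (σ : Strategy V) (w : List V) : Prop :=
  ∀ (u : List V) (v x : V), u ++ [v, x] <+: w → v ∈ G.pos i → x = σ u v

/-- A play of the finite-time Muller game with threshold `k`: a finite path
whose maxscore (over all subsets) is exactly `k`, while the maxscore of
its proper prefixes is `< k`. -/
def FTPlay (G : Arena V) (k : ℕ) (w : List V) : Prop :=
  w.Chain' G.E ∧ maxscore (Set.univ : Set (Set V)) w = k ∧
    maxscore (Set.univ : Set (Set V)) w.dropLast < k

/-- Player `i` wins the finite-time Muller game with threshold `k` from `v`. -/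
def FTWinFrom (G : Arena V) (i : Fin 2) (𝓕i : Set (Set V)) (k : ℕ) (v : V) : Prop :=
  ∃ σ : Strategy V, G.Legal σ ∧
    ∀ w : List V, FTPlay G k w → w.head? = some v → G.ConsistentFin i σ w →
      ∃ F ∈ 𝓕i, score F w = k

/-- The winning region of Player `i` in the finite-time Muller game. -/
def FTWinRegion (G : Arena V) (i : Fin 2) (𝓕i : Set (Set V)) (k : ℕ) : Set V :=
  {v | FTWinFrom G i 𝓕i k v}

/-- A play of McNaughton's finite-time Muller game: a finite path such that some
set `F` reaches score `|F|! + 1`, while no set did so in a proper prefix. -/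
def McNPlay (G : Arena V) (w : List V) : Prop :=
  w.Chain' G.E ∧ (∃ F : Set V, score F w = F.ncard.factorial + 1) ∧
    ∀ u : List V, u <+: w → u ≠ w →
      ∀ F : Set V, score F u ≠ F.ncard.factorial + 1

/-- Player `i` wins McNaughton's finite-time Muller game from `v`. -/
def McNWinFrom (G : Arena V) (i : Fin 2) (𝓕i : Set (Set V)) (v : V) : Prop :=
  ∃ σ : Strategy V, G.Legal σ ∧
    ∀ w : List V, McNPlay G w → w.head? = some v → G.ConsistentFin i σ w →
      ∃ F ∈ 𝓕i, score F w = F.ncard.factorial + 1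

/-- The winning region of Player `i` in McNaughton's finite-time Muller game. -/
def McNWinRegion (G : Arena V) (i : Fin 2) (𝓕i : Set (Set V)) : Set V :=
  {v | McNWinFrom G i 𝓕i v}

open Classical in
/-- The list `ρ₀ ⋯ ρₙ` of the first `n+1` vertices of the unique play that starts
in `v` and is consistent with the strategy `σ` of Player `i` and the strategy `τ`
of the other player. -/
noncomputable def playList (G : Arena V) (i : Fin 2) (σ τ : Strategy V) (v : V) :
    ℕ → List V
  | 0 => [v]
  | n + 1 =>
      let w := playList G i σ τ v n
      let u := w.getLastD v
      w ++ [if u ∈ G.pos i then σ w.dropLast u else τ w.dropLast u]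

/-- `playOf G i σ τ v` : the unique play starting in `v` that is consistent with
the strategy `σ` of Player `i` and the strategy `τ` of the other player. -/
noncomputable def playOf (G : Arena V) (i : Fin 2) (σ τ : Strategy V) (v : V)
    (n : ℕ) : V :=
  (playList G i σ τ v n).getLastD v

/-- The arena `G_n` with vertices `{0, …, n}` (all belonging to Player 0) and
edges `{(i+1, i) : i < n} ∪ {(0, n), (1, n)}`. -/
def Gn (n : ℕ) : Arena (Fin (n + 1)) where
  V0 := Set.univ
  E := fun v u => (v.val = u.val + 1) ∨ ((v.val = 0 ∨ v.val = 1) ∧ u.val = n)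
  exists_succ := by
    intro v
    rcases v with ⟨j, hj⟩
    cases j with
    | zero => exact ⟨⟨n, Nat.lt_succ_self n⟩, Or.inr ⟨Or.inl rfl, rfl⟩⟩
    | succ m => exact ⟨⟨m, by omega⟩, Or.inl rfl⟩

/-
Player 0 always moves from `u` to `u - 1` (cyclically in `Fin (n + 1)`), so every play is
`v, v - 1, v - 2, …`, which visits every vertex infinitely often. In this cyclic sequence a
letter repeats only after all `n + 1` vertices have occurred, so two consecutive blocks with
the same occurrence set `F` force `F = V_n`; hence every `F ≠ V_n` has score at most one.
-/

open Fin.NatCast Fin.CommRing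

theorem score_le_one_of_forall_infix {F : Set V} {w : List V}
    (h : ∀ x a, x ++ [a] <:+: w → a ∈ x → occ x ≠ F) : score F w ≤ 1 := by
  refine csSup_le' ?_
  rintro k ⟨xs, rfl, hxs, hsuf⟩
  match xs, hxs, hsuf with
  | [], _, _ | [_], _, _ => simp
  | x₁ :: x₂ :: rest, hxs, hsuf =>
    obtain ⟨-, hx₁⟩ := hxs x₁ (by simp)
    obtain ⟨hx₂ne, hx₂⟩ := hxs x₂ (by simp)
    obtain ⟨a, y, rfl⟩ := List.exists_cons_of_ne_nil hx₂ne
    have ha : a ∈ x₁ := by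
      change a ∈ occ x₁
      rw [hx₁, ← hx₂]
      simp [occ]
    refine absurd hx₁ (h x₁ a ?_ ha)
    have hpre : x₁ ++ [a] <+: (x₁ :: (a :: y) :: rest).flatten := by simp
    exact hpre.isInfix.trans hsuf.isInfix

theorem maxscoreInf_le {𝓕 : Set (Set V)} {ρ : ℕ → V} {k : ℕ}
    (h : ∀ F ∈ 𝓕, ∀ N, score F ((List.range (N + 1)).map ρ) ≤ k) :
    maxscoreInf 𝓕 ρ ≤ k :=
  iSup₂_le fun F hF => iSup_le fun N => by exact_mod_cast h F hF N

theorem List.exists_eq_map_range'_of_infix {α : Type*} {f : ℕ → α} {x : List α} {s n : ℕ}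
    (h : x <:+: (List.range' s n).map f) : ∃ t, x = (List.range' t x.length).map f := by
  obtain ⟨p, q, hpq⟩ := h
  obtain ⟨l, _, hl, hlpx, -⟩ := List.map_eq_append_iff.mp hpq.symm
  obtain ⟨k, -, rfl, -⟩ := List.range'_eq_append_iff.mp hl
  obtain ⟨_, l', hl', -, rfl⟩ := List.map_eq_append_iff.mp hlpx
  obtain ⟨k', -, -, rfl⟩ := List.range'_eq_append_iff.mp hl'
  exact ⟨s + k' * 1, by simp⟩

theorem iterate_sub_one_apply {R : Type*} [AddCommGroupWithOne R] (a : R) (k : ℕ) :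
    (fun u => u - 1)^[k] a = a - k := by
  induction k with
  | zero => simp
  | succ k ih => rw [Function.iterate_succ_apply', ih, Nat.cast_succ, sub_sub]

section PositionalPlay

variable {G : Arena V} {i : Fin 2} {f : V → V}

theorem Arena.playOf_eq_iterate (hpos : ∀ u, u ∈ G.pos i) (τ : Strategy V) (v : V) (k : ℕ) :
    playOf G i (fun _ => f) τ v k = f^[k] v := by
  induction k with
  | zero => simp [playOf, playList]
  | succ k ih =>
    rw [Function.iterate_succ_apply', ← ih]
    simp only [playOf, playList, if_pos (hpos _), List.getLastD_concat]

theorem Arena.ConsistentInf.eq_iterate {ρ : ℕ → V} (hpos : ∀ u, u ∈ G.pos i)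
    (hc : G.ConsistentInf i (fun _ => f) ρ) (k : ℕ) : ρ k = f^[k] (ρ 0) := by
  induction k with
  | zero => rfl
  | succ k ih => rw [hc k (hpos _), ih, Function.iterate_succ_apply']

end PositionalPlay

section Countdown

variable {n : ℕ}

theorem sub_natCast_eq_sub_natCast_iff (v : Fin (n + 1)) {i j : ℕ} (hij : i ≤ j) :
    v - i = v - j ↔ n + 1 ∣ j - i := by
  rw [sub_right_inj, ← Fin.natCast_eq_zero, Nat.cast_sub hij, sub_eq_zero, eq_comm]

theorem sub_natCast_val_sub (v u : Fin (n + 1)) (t : ℕ) : v - (t + (v - t - u).val : ℕ) = u := by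
  rw [Nat.cast_add, Fin.cast_val_eq_self]
  abel

theorem limitSet_sub_natCast (v : Fin (n + 1)) :
    limitSet (fun k : ℕ => v - k) = Set.univ := by
  refine Set.eq_univ_of_forall fun u N => ⟨N + (v - N - u).val, by omega, ?_⟩
  exact sub_natCast_val_sub v u N

theorem occ_eq_univ_of_infix_map_sub_natCast (v : Fin (n + 1)) {N : ℕ} {x : List (Fin (n + 1))}
    {a : Fin (n + 1)} (hx : x ++ [a] <:+: (List.range N).map (fun k : ℕ => v - k))
    (ha : a ∈ x) : occ x = Set.univ := by
  rw [List.range_eq_range'] at hx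
  obtain ⟨t, ht⟩ := List.exists_eq_map_range'_of_infix hx
  rw [List.length_append, List.length_singleton, List.range'_concat, List.map_append] at ht
  obtain ⟨hxt, hta⟩ := List.append_inj' ht (by simp)
  simp only [List.map_cons, List.map_nil, List.cons.injEq, and_true, one_mul] at hta
  rw [hxt] at ha
  obtain ⟨_, hi, hia⟩ := List.mem_map.mp ha
  rw [List.mem_range'_1] at hi
  have hlong : n + 1 ≤ x.length := by
    have hdvd := (sub_natCast_eq_sub_natCast_iff v (by omega)).mp (hia.trans hta)
    have := Nat.le_of_dvd (by omega) hdvd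
    omega
  refine Set.eq_univ_of_forall fun u => ?_
  change u ∈ x
  rw [hxt, List.mem_map]
  refine ⟨t + (v - t - u).val, List.mem_range'_1.mpr ⟨by omega, ?_⟩, sub_natCast_val_sub v u t⟩
  have := (v - t - u).isLt
  omega

theorem Gn_mem_pos_zero (u : Fin (n + 1)) : u ∈ (Gn n).pos 0 := by
  simp [Arena.pos, Gn]

theorem Gn_edge_sub_one (u : Fin (n + 1)) : (Gn n).E u (u - 1) := by
  simp only [Gn, Fin.coe_sub_one]
  split_ifs with hu
  · exact Or.inr ⟨Or.inl (by simp [hu]), rfl⟩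
  · have : u.val ≠ 0 := fun h => hu (Fin.ext h)
    exact Or.inl (by omega)

end Countdown

theorem stmt_16_general (n : ℕ) :
    ∃ σ : Strategy (Fin (n + 1)), (Gn n).Legal σ ∧
      (∀ (w w' : List (Fin (n + 1))) (u : Fin (n + 1)), σ w u = σ w' u) ∧
      (∀ (v : Fin (n + 1)) (ρ : ℕ → Fin (n + 1)),
        (Gn n).IsPlay v ρ → (Gn n).ConsistentInf 0 σ ρ →
          limitSet ρ ∈ ({Set.univ} : Set (Set (Fin (n + 1))))) ∧
      ∀ (v : Fin (n + 1)) (τ : Strategy (Fin (n + 1))), (Gn n).Legal τ →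
        maxscoreInf {F : Set (Fin (n + 1)) | F ≠ Set.univ}
          (playOf (Gn n) 0 σ τ v) ≤ 2 := by
  refine ⟨fun _ u => u - 1, fun _ => Gn_edge_sub_one, fun _ _ _ => rfl, ?_, ?_⟩
  · rintro v ρ ⟨rfl, -⟩ hc
    have hρ : ρ = fun k : ℕ => ρ 0 - k := funext fun k => by
      rw [hc.eq_iterate Gn_mem_pos_zero, iterate_sub_one_apply]
    rw [hρ, limitSet_sub_natCast]
    exact Set.mem_singleton _
  · intro v τ _
    have hρ : playOf (Gn n) 0 (fun _ u => u - 1) τ v = fun k : ℕ => v - k := funext fun k => by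
      rw [Arena.playOf_eq_iterate Gn_mem_pos_zero, iterate_sub_one_apply]
    rw [hρ]
    refine maxscoreInf_le fun F hF N => le_trans ?_ one_le_two
    refine score_le_one_of_forall_infix fun x a hx ha => ?_
    rw [occ_eq_univ_of_infix_map_sub_natCast v hx ha]
    exact Ne.symm hF

/-- In the Muller game `𝒢_n = (G_n, {V_n}, 2^{V_n} ∖ {V_n})`,
Player 0 has a positional winning strategy `σ` from every vertex such that
`maxscore_{𝓕₁ⁿ}(play(v, σ, τ)) ≤ 2` for every vertex `v` and every strategy `τ`
of Player 1. -/
theorem stmt_16 (n : ℕ) (hn : 1 ≤ n) :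
    ∃ σ : Strategy (Fin (n + 1)), (Gn n).Legal σ ∧
      (∀ (w w' : List (Fin (n + 1))) (u : Fin (n + 1)), σ w u = σ w' u) ∧
      (∀ (v : Fin (n + 1)) (ρ : ℕ → Fin (n + 1)),
        (Gn n).IsPlay v ρ → (Gn n).ConsistentInf 0 σ ρ →
          limitSet ρ ∈ ({Set.univ} : Set (Set (Fin (n + 1))))) ∧
      ∀ (v : Fin (n + 1)) (τ : Strategy (Fin (n + 1))), (Gn n).Legal τ →
        maxscoreInf {F : Set (Fin (n + 1)) | F ≠ Set.univ}
          (playOf (Gn n) 0 σ τ v) ≤ 2 :=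
  stmt_16_general n
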